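/- arXiv:2011.12588 — 3 statements merged into one kernel-verified Lean document; each statement's English description precedes it below -/
import Mathlib

section
/- In a left-symmetric algebra W, let ξ ∈ W satisfy ξ△ξ = λ·e for some scalar λ and element e with the property that v△e = v for all v in a subspace V¹ ⊆ W. Suppose ξ△v = 0 for all v ∈ V¹ and that for all v ∈ V¹ the element v△ξ satisfies ξ△(v△ξ) = (v△ξ)△ξ. Then for all v ∈ V¹: (v△ξ)△ξ = (λ/2)·v. That is, the composition r*_ξ ∘ r_ξ, where r_ξ(v) = v△ξ and r*_ξ(a) = a△ξ, is the scalar map (λ/2)·Id on V¹. -/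
/-- In a left-symmetric algebra, under the stated hypotheses the composition
`r*_ξ ∘ r_ξ : v ↦ (v△ξ)△ξ` is the scalar map `(λ/2)·Id` on `V¹`. -/
theorem stmt_6
    (W : Type*) [AddCommGroup W] [Module ℝ W]
    (mul : W →ₗ[ℝ] W →ₗ[ℝ] W)
    (hls : ∀ x y z : W,
      mul x (mul y z) - mul y (mul x z) = mul (mul x y) z - mul (mul y x) z)
    (V1 : Submodule ℝ W) (ξ e : W) (lam : ℝ)
    (hξξ : mul ξ ξ = lam • e)
    (he : ∀ v ∈ V1, mul v e = v)
    (hξv : ∀ v ∈ V1, mul ξ v = 0)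
    (hcomm : ∀ v ∈ V1, mul ξ (mul v ξ) = mul (mul v ξ) ξ) :
    ∀ v ∈ V1, mul (mul v ξ) ξ = (lam / 2) • v := by
  intro v hv
  have h := hls ξ v ξ
  rw [hξξ, hξv v hv, hcomm v hv, map_zero, LinearMap.zero_apply,
    map_smul, he v hv] at h
  -- h : mul (mul v ξ) ξ - lam • v = 0 - mul (mul v ξ) ξ
  have h2 : (2 : ℝ) • mul (mul v ξ) ξ = lam • v := by
    rw [two_smul]
    abel_nf
    abel_nf at h
    linear_combination (norm := module) h
  have := congrArg (fun w => ((2 : ℝ)⁻¹) • w) h2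
  simp only [smul_smul] at this
  rw [inv_mul_cancel₀ (by norm_num : (2:ℝ) ≠ 0), one_smul] at this
  rw [this]; congr 1; ring
end

section
/- On the space Sym(m, ℝ) of real symmetric m×m matrices, define x△y := x̲y + y·(x̲)ᵀ, where x̲ is the lower triangular matrix with (x̲)_{ii} = x_{ii}/2, (x̲)_{ij} = x_{ij} for i > j, and 0 for i < j. Then △ is left-symmetric: (x△y)△z − (y△x)△z = x△(y△z) − y△(x△z) for all x, y, z ∈ Sym(m, ℝ). -/
open Matrix

/-- The lower triangular part `x̲` of a matrix: halved diagonal, strict lower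
triangle of `x`, zero above the diagonal. -/
noncomputable def lowerPart {m : ℕ} (x : Matrix (Fin m) (Fin m) ℝ) : Matrix (Fin m) (Fin m) ℝ :=
  fun i j => if i = j then x i i / 2 else if j < i then x i j else 0

/-- The Vinberg product `x△y := x̲y + y(x̲)ᵀ` on symmetric matrices. -/
noncomputable def vinbergMul {m : ℕ} (x y : Matrix (Fin m) (Fin m) ℝ) : Matrix (Fin m) (Fin m) ℝ :=
  lowerPart x * y + y * (lowerPart x)ᵀ

lemma lowerPart_eq_zero_of_lt {m : ℕ} {x : Matrix (Fin m) (Fin m) ℝ} {i j : Fin m}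
    (h : i < j) : lowerPart x i j = 0 := by
  simp [lowerPart, h.ne, asymm h]

lemma lowerPart_sub {m : ℕ} (u v : Matrix (Fin m) (Fin m) ℝ) :
    lowerPart (u - v) = lowerPart u - lowerPart v := by
  ext i j
  simp only [lowerPart, Matrix.sub_apply]
  split_ifs <;> ring

lemma lowerPart_add_transpose {m : ℕ} (a : Matrix (Fin m) (Fin m) ℝ) (h : a.IsSymm) :
    lowerPart a + (lowerPart a)ᵀ = a := by
  ext i j
  have hsymm : a j i = a i j := h.apply i j
  rcases lt_trichotomy i j with h1 | h1 | h1
  · simp [lowerPart, Matrix.add_apply, Matrix.transpose_apply, h1.ne, h1.ne', h1, asymm h1, hsymm]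
  · subst h1
    simp [lowerPart, Matrix.add_apply, Matrix.transpose_apply]
  · simp [lowerPart, Matrix.add_apply, Matrix.transpose_apply, h1.ne', h1.ne, h1, asymm h1]

lemma comm_strictLower {m : ℕ} (x y : Matrix (Fin m) (Fin m) ℝ) {i j : Fin m} (hij : i < j) :
    (lowerPart x * lowerPart y - lowerPart y * lowerPart x) i j = 0 := by
  simp only [Matrix.sub_apply, Matrix.mul_apply]
  have h1 : ∀ u v : Matrix (Fin m) (Fin m) ℝ,
      ∑ k, lowerPart u i k * lowerPart v k j = 0 := by
    intro u v
    apply Finset.sum_eq_zero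
    intro k _
    rcases lt_or_ge i k with hk | hk
    · rw [lowerPart_eq_zero_of_lt hk, zero_mul]
    · rw [lowerPart_eq_zero_of_lt (lt_of_le_of_lt hk hij), mul_zero]
  rw [h1, h1, sub_zero]

lemma lowerPart_comm_add_transpose {m : ℕ} (x y : Matrix (Fin m) (Fin m) ℝ) :
    lowerPart ((lowerPart x * lowerPart y - lowerPart y * lowerPart x)
      + (lowerPart x * lowerPart y - lowerPart y * lowerPart x)ᵀ)
      = lowerPart x * lowerPart y - lowerPart y * lowerPart x := by
  ext i j
  rcases lt_trichotomy i j with h1 | h1 | h1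
  · rw [lowerPart_eq_zero_of_lt h1, comm_strictLower x y h1]
  · subst h1
    simp only [lowerPart, eq_self_iff_true, if_true, Matrix.add_apply, Matrix.transpose_apply]
    ring
  · simp only [lowerPart, if_neg h1.ne', if_pos h1, Matrix.add_apply, Matrix.transpose_apply]
    rw [comm_strictLower x y h1, add_zero]

/-- The product `x△y = x̲y + y(x̲)ᵀ` on `Sym(m, ℝ)` is left-symmetric. -/
theorem stmt_11 (m : ℕ) (x y z : Matrix (Fin m) (Fin m) ℝ)
    (hx : x.IsSymm) (hy : y.IsSymm) (hz : z.IsSymm) :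
    vinbergMul (vinbergMul x y) z - vinbergMul (vinbergMul y x) z
      = vinbergMul x (vinbergMul y z) - vinbergMul y (vinbergMul x z) := by
  set a := lowerPart x with ha
  set b := lowerPart y with hb
  set C := a * b - b * a with hC
  have hxs : a + aᵀ = x := lowerPart_add_transpose x hx
  have hys : b + bᵀ = y := lowerPart_add_transpose y hy
  have h1 : vinbergMul x y - vinbergMul y x = C + Cᵀ := by
    have : vinbergMul x y - vinbergMul y x
        = a * (b + bᵀ) + (b + bᵀ) * aᵀ - (b * (a + aᵀ) + (a + aᵀ) * bᵀ) := by
      rw [hxs, hys]; rfl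
    rw [this, hC, Matrix.transpose_sub, Matrix.transpose_mul, Matrix.transpose_mul]
    noncomm_ring
  have h2 : lowerPart (vinbergMul x y) - lowerPart (vinbergMul y x) = C := by
    rw [← lowerPart_sub, h1, hC]
    exact lowerPart_comm_add_transpose x y
  have hL : vinbergMul (vinbergMul x y) z - vinbergMul (vinbergMul y x) z
      = C * z + z * Cᵀ := by
    show lowerPart (vinbergMul x y) * z + z * (lowerPart (vinbergMul x y))ᵀ
        - (lowerPart (vinbergMul y x) * z + z * (lowerPart (vinbergMul y x))ᵀ)
        = C * z + z * Cᵀ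
    rw [← h2, Matrix.transpose_sub]
    noncomm_ring
  have hR : vinbergMul x (vinbergMul y z) - vinbergMul y (vinbergMul x z)
      = C * z + z * Cᵀ := by
    show a * (b * z + z * bᵀ) + (b * z + z * bᵀ) * aᵀ
        - (b * (a * z + z * aᵀ) + (a * z + z * aᵀ) * bᵀ) = C * z + z * Cᵀ
    rw [hC, Matrix.transpose_sub, Matrix.transpose_mul, Matrix.transpose_mul]
    noncomm_ring
  rw [hL, hR]
end

section
/- On Sym(m, ℝ) with the product x△y := x̲y + y(x̲)ᵀ, the linear form s(x) := tr(x) satisfies: s(x△y) = tr(x̲y + y(x̲)ᵀ) defines a positive definite symmetric bilinear form on Sym(m, ℝ). Explicitly, s(x△x) = Σ_{i} x_{ii}² + 2Σ_{i>j} x_{ij}² > 0 for x ≠ 0. -/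
open Matrix

lemma stmt13_trace (m : ℕ) (x : Matrix (Fin m) (Fin m) ℝ) (hx : x.IsSymm) :
    (vinbergMul x x).trace
      = (∑ i, (x i i) ^ 2) +
        2 * ∑ i, ∑ j ∈ Finset.univ.filter (fun j => j < i), (x i j) ^ 2 := by
  have hsym : ∀ i j, x j i = x i j := fun i j => by
    exact hx.apply i j
  have hrow : ∀ i : Fin m, ∑ j, lowerPart x i j * x i j
      = (x i i) ^ 2 / 2 + ∑ j ∈ Finset.univ.filter (fun j => j < i), (x i j) ^ 2 := by
    intro i
    have : ∀ j : Fin m, lowerPart x i j * x i j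
        = (if j = i then (x i i) ^ 2 / 2 else 0)
          + (if j < i then (x i j) ^ 2 else 0) := by
      intro j
      unfold lowerPart
      rcases lt_trichotomy j i with h | h | h
      · simp [h, h.ne, h.ne', div_mul_eq_mul_div, sq]
      · simp [h, sq, div_mul_eq_mul_div, lt_irrefl]
      · simp [h, h.ne', (h.ne').symm, not_lt.mpr h.le]
    simp only [this, Finset.sum_add_distrib, Finset.sum_ite_eq', Finset.mem_univ, if_true,
      Finset.sum_filter]
  have h1 : (lowerPart x * x).trace = ∑ i, ∑ j, lowerPart x i j * x i j := by
    simp only [Matrix.trace, Matrix.diag, Matrix.mul_apply]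
    exact Finset.sum_congr rfl fun i _ => Finset.sum_congr rfl fun j _ => by rw [hsym i j]
  have h2 : (x * (lowerPart x)ᵀ).trace = ∑ i, ∑ j, lowerPart x i j * x i j := by
    simp only [Matrix.trace, Matrix.diag, Matrix.mul_apply, Matrix.transpose_apply]
    exact Finset.sum_congr rfl fun i _ => Finset.sum_congr rfl fun j _ => mul_comm _ _
  have : (vinbergMul x x).trace = 2 * ∑ i, ∑ j, lowerPart x i j * x i j := by
    unfold vinbergMul
    rw [Matrix.trace_add, h1, h2]; ring
  rw [this]
  simp only [hrow, Finset.sum_add_distrib, ← Finset.sum_div]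
  ring

/-- `s(x△x) = tr(x̲x + x(x̲)ᵀ) = Σᵢ xᵢᵢ² + 2Σ_{i>j} xᵢⱼ²`, which is positive
for nonzero symmetric `x`; hence `s(x△y) := tr(x△y)` is positive definite. -/
theorem stmt_13 (m : ℕ) (x : Matrix (Fin m) (Fin m) ℝ) (hx : x.IsSymm) :
    (vinbergMul x x).trace
      = (∑ i, (x i i) ^ 2) +
        2 * ∑ i, ∑ j ∈ Finset.univ.filter (fun j => j < i), (x i j) ^ 2 ∧
    (x ≠ 0 → 0 < (vinbergMul x x).trace) := by
  have key := stmt13_trace m x hx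
  refine ⟨key, fun hne => ?_⟩
  rw [key]
  have hsym : ∀ i j, x j i = x i j := fun i j => by
    exact hx.apply i j
  obtain ⟨i, j, hij⟩ : ∃ i j, x i j ≠ 0 := by
    by_contra h
    push_neg at h
    exact hne (by ext i j; simp [h])
  have hA : 0 ≤ ∑ i, (x i i) ^ 2 := Finset.sum_nonneg fun _ _ => sq_nonneg _
  have hB : 0 ≤ ∑ i, ∑ j ∈ Finset.univ.filter (fun j => j < i), (x i j) ^ 2 :=
    Finset.sum_nonneg fun _ _ => Finset.sum_nonneg fun _ _ => sq_nonneg _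
  rcases lt_trichotomy i j with h | h | h
  · have hpos : 0 < ∑ i, ∑ j ∈ Finset.univ.filter (fun j => j < i), (x i j) ^ 2 := by
      refine Finset.sum_pos' (fun _ _ => Finset.sum_nonneg fun _ _ => sq_nonneg _)
        ⟨j, Finset.mem_univ _, Finset.sum_pos' (fun _ _ => sq_nonneg _)
          ⟨i, Finset.mem_filter.mpr ⟨Finset.mem_univ _, h⟩, ?_⟩⟩
      have : x j i ≠ 0 := by rw [hsym i j]; exact hij
      positivity
    linarith
  · have hpos : 0 < ∑ i, (x i i) ^ 2 := by
      refine Finset.sum_pos' (fun _ _ => sq_nonneg _) ⟨i, Finset.mem_univ _, ?_⟩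
      subst h; positivity
    linarith
  · have hpos : 0 < ∑ i, ∑ j ∈ Finset.univ.filter (fun j => j < i), (x i j) ^ 2 := by
      refine Finset.sum_pos' (fun _ _ => Finset.sum_nonneg fun _ _ => sq_nonneg _)
        ⟨i, Finset.mem_univ _, Finset.sum_pos' (fun _ _ => sq_nonneg _)
          ⟨j, Finset.mem_filter.mpr ⟨Finset.mem_univ _, h⟩, by positivity⟩⟩
    linarith
end
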